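/- Let A ∈ ℝ^{m×n} with A ≠ 0 and L ⊆ {1,…,m}. Then for all J ∈ S(A), H_J(A|L) = max{ ‖v_{J∩L}‖* : v ∈ ℝ^J_+, ‖A_Jᵀ v‖* ≤ 1 } = 1 / min{ ‖A_Jᵀ v‖* : v ∈ ℝ^J_+, ‖v_{J∩L}‖* = 1 }, with the convention that the last denominator is +∞ (so the value is 0) when J ∩ L = ∅. -/

import Mathlib

open Matrix Metric
open scoped Classical

/-- `J ⊆ {1,…,m}` is `A`-surjective: `A_J ℝ^n + ℝ^J_+ = ℝ^J`. -/
def ASurj {m n : ℕ} (A : Matrix (Fin m) (Fin n) ℝ) (J : Set (Fin m)) : Prop :=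
  ∀ w : Fin m → ℝ, ∃ x : Fin n → ℝ, ∀ i ∈ J, A.mulVec x i ≤ w i

/-- `H_J(A|L) = max_{y ∈ ℝ^L, ‖y‖ ≤ 1} min{‖x‖ : A_J x ≤ y_J}`, with the
convention `y_j = 0` for `j ∉ L`. -/
noncomputable def HJL {m n : ℕ} (A : Matrix (Fin m) (Fin n) ℝ) (L J : Set (Fin m)) : ℝ :=
  sSup {t | ∃ y : Fin m → ℝ, (∀ i ∉ L, y i = 0) ∧ ‖y‖ ≤ 1 ∧
    t = sInf {r | ∃ x : Fin n → ℝ, (∀ i ∈ J, A.mulVec x i ≤ y i) ∧ r = ‖x‖}}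

/-- The Hoffman constant `H(A|L) = max_{J ∈ S(A)} H_J(A|L)`. -/
noncomputable def HoffAL {m n : ℕ} (A : Matrix (Fin m) (Fin n) ℝ) (L : Set (Fin m)) : ℝ :=
  sSup {t | ∃ J : Set (Fin m), ASurj A J ∧ t = HJL A L J}

/-- The dual norm `‖v‖* = max_{‖x‖ ≤ 1} ⟨v, x⟩`. -/
noncomputable def dualNorm {d : ℕ} (v : Fin d → ℝ) : ℝ :=
  sSup {t | ∃ x : Fin d → ℝ, ‖x‖ ≤ 1 ∧ t = ∑ i, v i * x i}

/-- `dist_L(b, S) = inf{‖b − y‖ : y ∈ S, (b − y)_{L^c} = 0}`. -/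
noncomputable def distL {m : ℕ} (L : Set (Fin m)) (b : Fin m → ℝ)
    (S : Set (Fin m → ℝ)) : ℝ :=
  sInf {r | ∃ y ∈ S, (∀ i ∉ L, b i - y i = 0) ∧ r = ‖b - y‖}

/-!
On `Fin d → ℝ` the norm is the sup norm, so `dualNorm` is the `ℓ¹` norm.

For fixed `y`, `min {‖x‖ : A_J x ≤ y_J}` is a linear program with dual
`max {-⟨v, y⟩ : v ∈ ℝ^J_+, ‖A_Jᵀ v‖* ≤ 1}`: weak duality is Hölder's inequality, and strong
duality comes from separating `y` from the closed convex set `A_J (closedBall 0 r) + ℝ^J_+`.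
Over the unit vectors `y` supported on `L`, the best value of `-⟨v, y⟩` is `‖v_{J∩L}‖*`, and
exchanging the two maxima gives the first formula. Surjectivity of `J` bounds `∑ v_i` by a
multiple of `‖A_Jᵀ v‖*`, so the supremum is finite and `‖A_Jᵀ v‖* > 0` for `v ≠ 0`; the second
formula then follows by rescaling `v`, both sides being positively homogeneous.
-/

section DualNorm

variable {d : ℕ}

theorem abs_dotProduct_le_sum_abs_mul_norm (a x : Fin d → ℝ) :
    |a ⬝ᵥ x| ≤ (∑ i, |a i|) * ‖x‖ :=
  calc |a ⬝ᵥ x| ≤ ∑ i, |a i * x i| := Finset.abs_sum_le_sum_abs _ _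
    _ ≤ ∑ i, |a i| * ‖x‖ := by
      gcongr with i
      rw [abs_mul]
      exact mul_le_mul_of_nonneg_left (norm_le_pi_norm x i) (abs_nonneg _)
    _ = (∑ i, |a i|) * ‖x‖ := (Finset.sum_mul _ _ _).symm

theorem norm_sign_le_one (a : Fin d → ℝ) : ‖fun i => (SignType.sign (a i) : ℝ)‖ ≤ 1 :=
  (pi_norm_le_iff_of_nonneg zero_le_one).2 fun i => by
    rcases lt_trichotomy (a i) 0 with h | h | h <;> simp [h]

theorem dotProduct_sign (a : Fin d → ℝ) :
    a ⬝ᵥ (fun i => (SignType.sign (a i) : ℝ)) = ∑ i, |a i| := by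
  simp only [dotProduct, self_mul_sign]

theorem dualNorm_eq_sum_abs (a : Fin d → ℝ) : dualNorm a = ∑ i, |a i| := by
  have hub : ∀ t ∈ {t | ∃ x : Fin d → ℝ, ‖x‖ ≤ 1 ∧ t = ∑ i, a i * x i}, t ≤ ∑ i, |a i| := by
    rintro t ⟨x, hx, rfl⟩
    calc a ⬝ᵥ x ≤ |a ⬝ᵥ x| := le_abs_self _
      _ ≤ (∑ i, |a i|) * ‖x‖ := abs_dotProduct_le_sum_abs_mul_norm a x
      _ ≤ ∑ i, |a i| := mul_le_of_le_one_right (by positivity) hx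
  exact le_antisymm (csSup_le ⟨_, _, norm_sign_le_one a, rfl⟩ hub)
    (le_csSup ⟨_, hub⟩ ⟨_, norm_sign_le_one a, (dotProduct_sign a).symm⟩)

theorem dualNorm_eq_norm_toLp (a : Fin d → ℝ) : dualNorm a = ‖WithLp.toLp 1 a‖ := by
  simp [dualNorm_eq_sum_abs, PiLp.norm_eq_of_L1]

theorem abs_dotProduct_le_dualNorm_mul_norm (a x : Fin d → ℝ) :
    |a ⬝ᵥ x| ≤ dualNorm a * ‖x‖ :=
  dualNorm_eq_sum_abs a ▸ abs_dotProduct_le_sum_abs_mul_norm a x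

theorem dualNorm_nonneg (a : Fin d → ℝ) : 0 ≤ dualNorm a :=
  dualNorm_eq_norm_toLp a ▸ norm_nonneg _

theorem dualNorm_smul (c : ℝ) (a : Fin d → ℝ) : dualNorm (c • a) = |c| * dualNorm a := by
  simp only [dualNorm_eq_norm_toLp, WithLp.toLp_smul, norm_smul, Real.norm_eq_abs]

theorem dualNorm_pos_iff {a : Fin d → ℝ} : 0 < dualNorm a ↔ a ≠ 0 := by
  simp [dualNorm_eq_norm_toLp]

theorem dualNorm_indicator_le_sum {v : Fin d → ℝ} (hv : ∀ i, 0 ≤ v i) (s : Set (Fin d)) :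
    dualNorm (s.indicator v) ≤ ∑ i, v i := by
  rw [dualNorm_eq_sum_abs]
  gcongr with i
  rw [abs_of_nonneg (Set.indicator_nonneg (fun j _ => hv j) i)]
  exact Set.indicator_le_self' (fun j _ => hv j) i

end DualNorm

section PositivelyHomogeneous

variable {V : Type*} [AddCommGroup V] [Module ℝ V] {S : Set V} {f g : V → ℝ}

theorem sSup_le_one_eq_one_div_sInf_eq_one (hS0 : (0 : V) ∈ S)
    (hS : ∀ c : ℝ, 0 ≤ c → ∀ v ∈ S, c • v ∈ S)
    (hf : ∀ c : ℝ, 0 ≤ c → ∀ v, f (c • v) = c * f v)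
    (hg : ∀ c : ℝ, 0 ≤ c → ∀ v, g (c • v) = c * g v)
    (hfg : ∀ v ∈ S, 0 < f v → 0 < g v)
    (hbdd : BddAbove {t | ∃ v ∈ S, g v ≤ 1 ∧ t = f v}) :
    sSup {t | ∃ v ∈ S, g v ≤ 1 ∧ t = f v} = 1 / sInf {t | ∃ v ∈ S, f v = 1 ∧ t = g v} := by
  set S₁ := {t | ∃ v ∈ S, g v ≤ 1 ∧ t = f v}
  set S₂ := {t | ∃ v ∈ S, f v = 1 ∧ t = g v}
  have hf0 : f 0 = 0 := by simpa using hf 0 le_rfl 0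
  have hg0 : g 0 = 0 := by simpa using hg 0 le_rfl 0
  have h0 : (0 : ℝ) ∈ S₁ := ⟨0, hS0, hg0.trans_le zero_le_one, hf0.symm⟩
  -- normalizing `v` by `f v`, resp. `g v`, moves it between the two constraint sets
  have normalize_f : ∀ v ∈ S, 0 < f v → g v / f v ∈ S₂ := fun v hv hfv =>
    ⟨(f v)⁻¹ • v, hS _ (inv_nonneg.2 hfv.le) v hv, by rw [hf _ (inv_nonneg.2 hfv.le),
      inv_mul_cancel₀ hfv.ne'], by rw [hg _ (inv_nonneg.2 hfv.le), div_eq_inv_mul]⟩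
  have normalize_g : ∀ v ∈ S, f v = 1 → (g v)⁻¹ ∈ S₁ := fun v hv hfv => by
    have hgv := hfg v hv (hfv ▸ one_pos)
    exact ⟨(g v)⁻¹ • v, hS _ (inv_nonneg.2 hgv.le) v hv, by rw [hg _ (inv_nonneg.2 hgv.le),
      inv_mul_cancel₀ hgv.ne'], by rw [hf _ (inv_nonneg.2 hgv.le), hfv, mul_one]⟩
  rcases S₂.eq_empty_or_nonempty with hS₂ | ⟨_, v₀, hv₀, hfv₀, rfl⟩
  · rw [hS₂, Real.sInf_empty, div_zero]
    refine le_antisymm (csSup_le ⟨0, h0⟩ ?_) (le_csSup hbdd h0)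
    rintro _ ⟨v, hv, -, rfl⟩
    by_contra! hfv
    simpa [hS₂] using normalize_f v hv hfv
  have hgv₀ := hfg v₀ hv₀ (hfv₀ ▸ one_pos)
  have hα : 0 < sSup S₁ :=
    (inv_pos.2 hgv₀).trans_le (le_csSup hbdd (normalize_g v₀ hv₀ hfv₀))
  have hlow : ∀ b ∈ S₂, (sSup S₁)⁻¹ ≤ b := by
    rintro _ ⟨v, hv, hfv, rfl⟩
    exact inv_le_of_inv_le₀ (hfg v hv (hfv ▸ one_pos)) (le_csSup hbdd (normalize_g v hv hfv))
  have hβ : (sSup S₁)⁻¹ ≤ sInf S₂ := le_csInf ⟨_, v₀, hv₀, hfv₀, rfl⟩ hlow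
  have hβ_pos : 0 < sInf S₂ := (inv_pos.2 hα).trans_le hβ
  rw [one_div]
  refine le_antisymm (csSup_le ⟨0, h0⟩ ?_) (inv_le_of_inv_le₀ hα hβ)
  rintro _ ⟨v, hv, hgv, rfl⟩
  rcases le_or_gt (f v) 0 with hfv | hfv
  · exact hfv.trans (inv_nonneg.2 hβ_pos.le)
  · refine le_inv_of_le_inv₀ hβ_pos ?_
    calc sInf S₂ ≤ g v / f v := csInf_le ⟨_, hlow⟩ (normalize_f v hv hfv)
      _ ≤ (f v)⁻¹ := by rw [div_eq_mul_inv]; exact mul_le_of_le_one_left (inv_nonneg.2 hfv.le) hgv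

end PositivelyHomogeneous

section Hoffman

variable {m n : ℕ} (A : Matrix (Fin m) (Fin n) ℝ) {L J : Set (Fin m)}

/-- `ℝ^J_+`, realized as the nonnegative vectors of `ℝ^m` vanishing outside `J`. -/
def nonnegOn (J : Set (Fin m)) : Set (Fin m → ℝ) := {v | (∀ i, 0 ≤ v i) ∧ ∀ i ∉ J, v i = 0}

theorem zero_mem_nonnegOn : (0 : Fin m → ℝ) ∈ nonnegOn J :=
  ⟨fun _ => le_rfl, fun _ _ => rfl⟩

theorem smul_mem_nonnegOn {c : ℝ} (hc : 0 ≤ c) {v : Fin m → ℝ} (hv : v ∈ nonnegOn J) :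
    c • v ∈ nonnegOn J :=
  ⟨fun i => mul_nonneg hc (hv.1 i), fun i hi => by simp [hv.2 i hi]⟩

theorem neg_dotProduct_le_dualNorm_mul_norm {v y : Fin m → ℝ} {x : Fin n → ℝ}
    (hv : v ∈ nonnegOn J) (hx : ∀ i ∈ J, (A *ᵥ x) i ≤ y i) :
    -(v ⬝ᵥ y) ≤ dualNorm (Aᵀ *ᵥ v) * ‖x‖ := by
  have hle : v ⬝ᵥ (A *ᵥ x) ≤ v ⬝ᵥ y := Finset.sum_le_sum fun i _ => by
    by_cases hi : i ∈ J
    · exact mul_le_mul_of_nonneg_left (hx i hi) (hv.1 i)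
    · simp [hv.2 i hi]
  rw [dotProduct_mulVec, ← mulVec_transpose] at hle
  linarith [neg_abs_le ((Aᵀ *ᵥ v) ⬝ᵥ x), abs_dotProduct_le_dualNorm_mul_norm (Aᵀ *ᵥ v) x]

/-- Test `v` against a solution of `A_J x ≤ -1`. -/
theorem ASurj.exists_sum_le (hJ : ASurj A J) :
    ∃ M, 0 ≤ M ∧ ∀ v ∈ nonnegOn J, ∑ i, v i ≤ M * dualNorm (Aᵀ *ᵥ v) := by
  obtain ⟨x₀, hx₀⟩ := hJ fun _ => -1
  refine ⟨‖x₀‖, norm_nonneg x₀, fun v hv => ?_⟩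
  simpa [dotProduct, mul_comm] using neg_dotProduct_le_dualNorm_mul_norm A hv hx₀

theorem ASurj.eq_zero_of_transpose_mulVec_eq_zero (hJ : ASurj A J) {v : Fin m → ℝ}
    (hv : v ∈ nonnegOn J) (h : Aᵀ *ᵥ v = 0) : v = 0 := by
  obtain ⟨M, -, hM⟩ := hJ.exists_sum_le
  have hsum : ∑ i, v i = 0 := by
    refine le_antisymm ?_ (Finset.sum_nonneg fun i _ => hv.1 i)
    simpa [h, dualNorm_eq_sum_abs] using hM v hv
  funext i
  exact (Finset.sum_eq_zero_iff_of_nonneg fun i _ => hv.1 i).1 hsum i (Finset.mem_univ i)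

open Set Pointwise in
/-- Separate `y` from the closed convex set `A(closedBall 0 r) + {s | s_J ≥ 0}`. -/
theorem exists_dotProduct_separation {r : ℝ} {y : Fin m → ℝ}
    (h : ¬∃ x : Fin n → ℝ, ‖x‖ ≤ r ∧ ∀ i ∈ J, (A *ᵥ x) i ≤ y i) :
    ∃ (w : Fin m → ℝ) (u : ℝ), w ⬝ᵥ y < u ∧
      ∀ x : Fin n → ℝ, ‖x‖ ≤ r → ∀ s : Fin m → ℝ, (∀ i ∈ J, 0 ≤ s i) → u < w ⬝ᵥ (A *ᵥ x + s) := by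
  set C : Set (Fin m → ℝ) := {s | ∀ i ∈ J, 0 ≤ s i}
  set K := A.mulVecLin '' closedBall 0 r + C
  have hC : IsClosed C := by
    simp only [C, ofPred_forall]
    exact isClosed_biInter fun i _ => isClosed_le continuous_const (continuous_apply i)
  have hK : IsClosed K := hC.add_left_of_isCompact
    ((isCompact_closedBall 0 r).image A.mulVecLin.continuous_of_finiteDimensional)
  have hKconv : Convex ℝ K := ((convex_closedBall 0 r).linear_image A.mulVecLin).add
    fun s hs t ht a b ha hb _ i hi => add_nonneg (mul_nonneg ha (hs i hi)) (mul_nonneg hb (ht i hi))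
  have hyK : y ∉ K := by
    rintro ⟨_, ⟨x, hx, rfl⟩, s, hs, hsum⟩
    refine h ⟨x, mem_closedBall_zero_iff.1 hx, fun i hi => ?_⟩
    have := congrFun hsum i
    simp only [Pi.add_apply, mulVecLin_apply] at this
    linarith [hs i hi]
  obtain ⟨f, u, hfy, hfK⟩ := geometric_hahn_banach_point_closed hKconv hK hyK
  set w : Fin m → ℝ := fun i => f (Pi.single i 1)
  have hf : ∀ z, f z = w ⬝ᵥ z := fun z => by
    conv_lhs => rw [pi_eq_sum_univ' z]
    simp only [map_sum, map_smul, smul_eq_mul, dotProduct, w, mul_comm]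
  refine ⟨w, u, hf y ▸ hfy, fun x hx s hs => hf _ ▸ hfK _ ?_⟩
  exact add_mem_add (mem_image_of_mem _ (mem_closedBall_zero_iff.2 hx)) hs

theorem exists_mem_nonnegOn_of_not_exists_norm_le {r : ℝ} (hr : 0 ≤ r) {y : Fin m → ℝ}
    (h : ¬∃ x : Fin n → ℝ, ‖x‖ ≤ r ∧ ∀ i ∈ J, (A *ᵥ x) i ≤ y i) :
    ∃ w ∈ nonnegOn J, r * dualNorm (Aᵀ *ᵥ w) < -(w ⬝ᵥ y) := by
  obtain ⟨w, u, hwy, hsep⟩ := exists_dotProduct_separation A h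
  have hr' : ‖(0 : Fin n → ℝ)‖ ≤ r := by simpa using hr
  have hu : u < 0 := by simpa using hsep 0 hr' 0 fun _ _ => le_rfl
  -- `w ⬝ᵥ · > u` on the cone `{s | s_J ≥ 0}` forces `w ⬝ᵥ · ≥ 0` on it
  have hcone : ∀ s : Fin m → ℝ, (∀ i ∈ J, 0 ≤ s i) → 0 ≤ w ⬝ᵥ s := by
    intro s hs
    by_contra! hneg
    have hc : 0 ≤ u / (w ⬝ᵥ s) := div_nonneg_of_nonpos hu.le hneg.le
    have := hsep 0 hr' ((u / (w ⬝ᵥ s)) • s) fun i hi => mul_nonneg hc (hs i hi)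
    rw [mulVec_zero, zero_add, dotProduct_smul, smul_eq_mul, div_mul_cancel₀ _ hneg.ne] at this
    exact lt_irrefl _ this
  have hsingle : ∀ i c, (i ∈ J → 0 ≤ c) → 0 ≤ w i * c := fun i c hc => by
    refine dotProduct_single w c i ▸ hcone _ fun j hj => ?_
    rcases eq_or_ne j i with rfl | hji
    · simpa using hc hj
    · simp [hji]
  have hw : w ∈ nonnegOn J := by
    refine ⟨fun i => by simpa using hsingle i 1 fun _ => zero_le_one, fun i hi => ?_⟩
    have := hsingle i (-1) fun h => absurd h hi
    linarith [hsingle i 1 fun _ => zero_le_one]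
  refine ⟨w, hw, ?_⟩
  set a := Aᵀ *ᵥ w
  have hx : ‖(-r) • fun j => (SignType.sign (a j) : ℝ)‖ ≤ r := by
    rw [norm_smul, Real.norm_eq_abs, abs_neg, abs_of_nonneg hr]
    exact mul_le_of_le_one_right hr (norm_sign_le_one a)
  have := hsep _ hx 0 fun _ _ => le_rfl
  rw [add_zero, dotProduct_mulVec, ← mulVec_transpose, dotProduct_smul, dotProduct_sign,
    ← dualNorm_eq_sum_abs, smul_eq_mul] at this
  linarith

theorem ASurj.exists_dual_certificate (hJ : ASurj A J) {r : ℝ} (hr : 0 ≤ r) {y : Fin m → ℝ}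
    (h : ¬∃ x : Fin n → ℝ, ‖x‖ ≤ r ∧ ∀ i ∈ J, (A *ᵥ x) i ≤ y i) :
    ∃ v ∈ nonnegOn J, dualNorm (Aᵀ *ᵥ v) ≤ 1 ∧ r < -(v ⬝ᵥ y) := by
  obtain ⟨w, hw, hwy⟩ := exists_mem_nonnegOn_of_not_exists_norm_le A hr h
  have hN : 0 < dualNorm (Aᵀ *ᵥ w) := by
    refine dualNorm_pos_iff.2 fun h0 => ?_
    simp [hJ.eq_zero_of_transpose_mulVec_eq_zero A hw h0, dualNorm_eq_sum_abs] at hwy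
  refine ⟨(dualNorm (Aᵀ *ᵥ w))⁻¹ • w, smul_mem_nonnegOn (inv_nonneg.2 hN.le) hw, ?_, ?_⟩
  · rw [mulVec_smul, dualNorm_smul, abs_of_nonneg (inv_nonneg.2 hN.le), inv_mul_cancel₀ hN.ne']
  · rw [smul_dotProduct, smul_eq_mul, ← mul_neg, lt_inv_mul_iff₀ hN, mul_comm]
    exact hwy

theorem exists_dualNorm_indicator_eq_neg_dotProduct (s : Set (Fin m)) (v : Fin m → ℝ) :
    ∃ y : Fin m → ℝ, (∀ i ∉ s, y i = 0) ∧ ‖y‖ ≤ 1 ∧ dualNorm (s.indicator v) = -(v ⬝ᵥ y) := by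
  refine ⟨-fun i => (SignType.sign (s.indicator v i) : ℝ), fun i hi => by simp [hi],
    by simpa using norm_sign_le_one (s.indicator v), ?_⟩
  rw [dotProduct_neg, neg_neg, dualNorm_eq_sum_abs, ← dotProduct_sign]
  refine Finset.sum_congr rfl fun i _ => ?_
  by_cases hi : i ∈ s <;> simp [hi]

theorem neg_dotProduct_le_dualNorm_indicator {v y : Fin m → ℝ} (hv : ∀ i ∉ J, v i = 0)
    (hy : ∀ i ∉ L, y i = 0) (hy₁ : ‖y‖ ≤ 1) :
    -(v ⬝ᵥ y) ≤ dualNorm ((J ∩ L).indicator v) := by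
  have hvy : v ⬝ᵥ y = (J ∩ L).indicator v ⬝ᵥ y := Finset.sum_congr rfl fun i _ => by
    by_cases hJ : i ∈ J <;> by_cases hL : i ∈ L <;> simp [hJ, hL, hv, hy]
  rw [hvy]
  calc _ ≤ |(J ∩ L).indicator v ⬝ᵥ y| := neg_le_abs _
    _ ≤ dualNorm ((J ∩ L).indicator v) * ‖y‖ := abs_dotProduct_le_dualNorm_mul_norm _ _
    _ ≤ _ := mul_le_of_le_one_right (dualNorm_nonneg _) hy₁

theorem ASurj.bddAbove_dualNorm_indicator (hJ : ASurj A J) :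
    BddAbove {t | ∃ v ∈ nonnegOn J, dualNorm (Aᵀ *ᵥ v) ≤ 1 ∧
      t = dualNorm ((J ∩ L).indicator v)} := by
  obtain ⟨M, hM, hsum⟩ := hJ.exists_sum_le
  refine ⟨M, ?_⟩
  rintro _ ⟨v, hv, hAv, rfl⟩
  calc dualNorm ((J ∩ L).indicator v) ≤ ∑ i, v i := dualNorm_indicator_le_sum hv.1 _
    _ ≤ M * dualNorm (Aᵀ *ᵥ v) := hsum v hv
    _ ≤ M := mul_le_of_le_one_right hM hAv

theorem ASurj.HJL_eq_sSup (hJ : ASurj A J) :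
    HJL A L J = sSup {t | ∃ v ∈ nonnegOn J, dualNorm (Aᵀ *ᵥ v) ≤ 1 ∧
      t = dualNorm ((J ∩ L).indicator v)} := by
  set S := {t | ∃ v ∈ nonnegOn J, dualNorm (Aᵀ *ᵥ v) ≤ 1 ∧ t = dualNorm ((J ∩ L).indicator v)}
  have hS : BddAbove S := hJ.bddAbove_dualNorm_indicator A
  have h0 : (0 : ℝ) ∈ S := ⟨0, zero_mem_nonnegOn, by simp [dualNorm_eq_sum_abs], by
    simp [dualNorm_eq_sum_abs]⟩
  set feasible := fun y : Fin m → ℝ =>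
    {r | ∃ x : Fin n → ℝ, (∀ i ∈ J, (A *ᵥ x) i ≤ y i) ∧ r = ‖x‖}
  have hfeas_bdd : ∀ y, BddBelow (feasible y) := fun y =>
    ⟨0, by rintro _ ⟨x, -, rfl⟩; exact norm_nonneg x⟩
  have hle : ∀ y : Fin m → ℝ, (∀ i ∉ L, y i = 0) → ‖y‖ ≤ 1 → sInf (feasible y) ≤ sSup S := by
    intro y hyL hy
    by_contra! hlt
    obtain ⟨v, hv, hAv, hvy⟩ := hJ.exists_dual_certificate A (le_csSup hS h0) fun ⟨x, hx, hxy⟩ =>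
      ((csInf_le (hfeas_bdd y) ⟨x, hxy, rfl⟩).trans hx).not_gt hlt
    exact (hvy.trans_le (neg_dotProduct_le_dualNorm_indicator hv.2 hyL hy)).not_ge
      (le_csSup hS ⟨v, hv, hAv, rfl⟩)
  refine le_antisymm (csSup_le ⟨_, 0, fun _ _ => rfl, by simp, rfl⟩ ?_) (csSup_le ⟨0, h0⟩ ?_)
  · rintro _ ⟨y, hyL, hy, rfl⟩
    exact hle y hyL hy
  · rintro _ ⟨v, hv, hAv, rfl⟩
    obtain ⟨y, hyL, hy, hvy⟩ := exists_dualNorm_indicator_eq_neg_dotProduct (J ∩ L) v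
    have hyL' : ∀ i ∉ L, y i = 0 := fun i hi => hyL i fun h => hi h.2
    calc dualNorm ((J ∩ L).indicator v) ≤ sInf (feasible y) := by
          refine le_csInf (let ⟨x, hx⟩ := hJ y; ⟨‖x‖, x, hx, rfl⟩) ?_
          rintro _ ⟨x, hx, rfl⟩
          rw [hvy]
          exact (neg_dotProduct_le_dualNorm_mul_norm A hv hx).trans
            (mul_le_of_le_one_left (norm_nonneg x) hAv)
      _ ≤ HJL A L J := le_csSup ⟨sSup S, by rintro _ ⟨y, hyL, hy, rfl⟩; exact hle y hyL hy⟩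
          ⟨y, hyL', hy, rfl⟩

theorem ASurj.sSup_eq_one_div_sInf (hJ : ASurj A J) :
    sSup {t | ∃ v ∈ nonnegOn J, dualNorm (Aᵀ *ᵥ v) ≤ 1 ∧ t = dualNorm ((J ∩ L).indicator v)} =
      1 / sInf {t | ∃ v ∈ nonnegOn J, dualNorm ((J ∩ L).indicator v) = 1 ∧
        t = dualNorm (Aᵀ *ᵥ v)} := by
  refine sSup_le_one_eq_one_div_sInf_eq_one zero_mem_nonnegOn
    (fun c hc v hv => smul_mem_nonnegOn hc hv)
    (fun c hc v => by rw [show (J ∩ L).indicator (c • v) = c • (J ∩ L).indicator v from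
      Set.indicator_const_smul _ c v, dualNorm_smul, abs_of_nonneg hc])
    (fun c hc v => by rw [mulVec_smul, dualNorm_smul, abs_of_nonneg hc])
    (fun v hv hpos => dualNorm_pos_iff.2 fun h0 => ?_) (hJ.bddAbove_dualNorm_indicator A)
  simp [hJ.eq_zero_of_transpose_mulVec_eq_zero A hv h0, dualNorm_eq_sum_abs] at hpos

end Hoffman

/-- When `J ∩ L = ∅` the set under `sInf` is empty, and `sInf ∅ = 0`, `1 / 0 = 0` give the
value `0` that the paper obtains from a denominator `+∞`. -/
theorem hoffman_HJ_dual_rest_general {m n : ℕ} (A : Matrix (Fin m) (Fin n) ℝ)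
    (L J : Set (Fin m)) (hJ : ASurj A J) :
    HJL A L J = sSup {t | ∃ v : Fin m → ℝ, (∀ i, 0 ≤ v i) ∧ (∀ i ∉ J, v i = 0) ∧
        dualNorm (A.transpose.mulVec v) ≤ 1 ∧
        t = dualNorm (fun i => if i ∈ J ∩ L then v i else 0)} ∧
    HJL A L J = 1 / sInf {t | ∃ v : Fin m → ℝ, (∀ i, 0 ≤ v i) ∧ (∀ i ∉ J, v i = 0) ∧
        dualNorm (fun i => if i ∈ J ∩ L then v i else 0) = 1 ∧
        t = dualNorm (A.transpose.mulVec v)} := by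
  have h₁ := hJ.HJL_eq_sSup (L := L)
  have h₂ := hJ.sSup_eq_one_div_sInf (L := L)
  simp only [nonnegOn, Set.mem_ofPred_eq, and_assoc] at h₁ h₂
  simp only [← Set.indicator_apply]
  exact ⟨h₁, h₁.trans h₂⟩

/-- Proposition 4, first part: for `A ≠ 0` and all `J ∈ S(A)`,
`H_J(A|L) = max{‖v_{J∩L}‖* : v ∈ ℝ^J_+, ‖A_Jᵀ v‖* ≤ 1}
          = 1 / min{‖A_Jᵀ v‖* : v ∈ ℝ^J_+, ‖v_{J∩L}‖* = 1}`,
where the value is `0` when `J ∩ L = ∅` (in Lean `1/0 = 0`, matching the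
convention that the denominator is `+∞` there, since the constraint set is then
empty and `sInf ∅ = 0`).  Vectors in `ℝ^J` are rendered as vectors in `ℝ^m`
vanishing outside `J`. -/
theorem hoffman_HJ_dual_rest {m n : ℕ} (A : Matrix (Fin m) (Fin n) ℝ)
    (hA : A ≠ 0) (L J : Set (Fin m)) (hJ : ASurj A J) :
    HJL A L J = sSup {t | ∃ v : Fin m → ℝ, (∀ i, 0 ≤ v i) ∧ (∀ i ∉ J, v i = 0) ∧
        dualNorm (A.transpose.mulVec v) ≤ 1 ∧
        t = dualNorm (fun i => if i ∈ J ∩ L then v i else 0)} ∧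
    HJL A L J = 1 / sInf {t | ∃ v : Fin m → ℝ, (∀ i, 0 ≤ v i) ∧ (∀ i ∉ J, v i = 0) ∧
        dualNorm (fun i => if i ∈ J ∩ L then v i else 0) = 1 ∧
        t = dualNorm (A.transpose.mulVec v)} :=
  hoffman_HJ_dual_rest_general A L J hJ
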